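/- If R is a pm⁺ G-graded commutative ring, then R is a Gelfand graded ring; moreover, any quotient R/I by a graded ideal I and any localization R_S at a multiplicatively closed set S ⊆ h(R) is again a pm⁺ graded ring. -/

import Mathlib

section GradedGelfand

variable {G : Type*} [AddGroup G] [DecidableEq G] {R : Type*} [CommRing R]
variable (𝒜 : G → AddSubgroup R) [GradedRing 𝒜]

/-- A homogeneous (graded) prime ideal: a proper graded ideal that is prime
with respect to homogeneous elements. -/
def IsGradedPrime (P : Ideal R) : Prop :=
  P.IsHomogeneous 𝒜 ∧ P ≠ ⊤ ∧
    ∀ a b : R, SetLike.IsHomogeneousElem 𝒜 a → SetLike.IsHomogeneousElem 𝒜 b →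
      a * b ∈ P → a ∈ P ∨ b ∈ P

/-- A graded maximal ideal: a proper graded ideal maximal among proper graded ideals. -/
def IsGradedMaximal (M : Ideal R) : Prop :=
  M.IsHomogeneous 𝒜 ∧ M ≠ ⊤ ∧
    ∀ J : Ideal R, J.IsHomogeneous 𝒜 → M ≤ J → J ≠ ⊤ → J = M

/-- The homogeneous prime spectrum of a graded ring. -/
def GSpec := { P : Ideal R // IsGradedPrime 𝒜 P }

/-- The Zariski topology on the homogeneous prime spectrum, generated by the basic
open sets `D_G(r)` for homogeneous `r`; the closed sets are exactly the `V_G(I)`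
for graded ideals `I`. -/
instance : TopologicalSpace (GSpec 𝒜) :=
  TopologicalSpace.generateFrom
    { U | ∃ r : R, SetLike.IsHomogeneousElem 𝒜 r ∧ U = { P : GSpec 𝒜 | r ∉ P.1 } }

/-- The set of graded maximal ideals inside the homogeneous prime spectrum. -/
def GMax : Set (GSpec 𝒜) := { P | IsGradedMaximal 𝒜 P.1 }

/-- A Gelfand graded ring: every homogeneous prime ideal is contained in a unique
graded maximal ideal. -/
def IsGelfandGraded : Prop :=
  ∀ P : Ideal R, IsGradedPrime 𝒜 P →
    ∃! M : Ideal R, IsGradedMaximal 𝒜 M ∧ P ≤ M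

/-- A pm⁺ graded ring: for every homogeneous prime `P`, the homogeneous primes
containing `P` form a chain. -/
def IsPMPlusGraded : Prop :=
  ∀ P Q Q' : Ideal R, IsGradedPrime 𝒜 P → IsGradedPrime 𝒜 Q → IsGradedPrime 𝒜 Q' →
    P ≤ Q → P ≤ Q' → Q ≤ Q' ∨ Q' ≤ Q

end GradedGelfand

/-!
A graded maximal ideal is a graded prime, and every proper graded ideal lies in one
(Zorn); two graded maximal ideals above the same graded prime are comparable in a pm⁺ ring, hence
equal. For quotients and localizations, the quotient map and the localization map are
grade-preserving, so pulling back sends graded primes to graded primes, and in both cases pulling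
back reflects inclusion of ideals: a chain upstairs is read off from a chain downstairs.
-/

section GelfandGraded

variable {G : Type*} [AddGroup G] [DecidableEq G] {R : Type*} [CommRing R]
variable {𝒜 : G → AddSubgroup R} [GradedRing 𝒜]

lemma exists_isGradedMaximal_le {P : Ideal R} (hP : P.IsHomogeneous 𝒜) (hP_ne_top : P ≠ ⊤) :
    ∃ M : Ideal R, IsGradedMaximal 𝒜 M ∧ P ≤ M := by
  let s : Set (Ideal R) := {I | I.IsHomogeneous 𝒜 ∧ I ≠ ⊤ ∧ P ≤ I}
  have chain_bound : ∀ c ⊆ s, IsChain (· ≤ ·) c → ∀ I ∈ c, ∃ J ∈ s, ∀ K ∈ c, K ≤ J := by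
    intro c hcs hc I hIc
    refine ⟨sSup c, ⟨Ideal.IsHomogeneous.sSup fun K hK => (hcs hK).1, ?_,
      (hcs hIc).2.2.trans (le_sSup hIc)⟩, fun K hK => le_sSup hK⟩
    rw [Ne, Ideal.eq_top_iff_one, Submodule.mem_sSup_of_directed ⟨I, hIc⟩ hc.directedOn]
    rintro ⟨K, hKc, hK1⟩
    exact (hcs hKc).2.1 ((Ideal.eq_top_iff_one K).2 hK1)
  obtain ⟨M, hPM, ⟨hM, hM_ne_top, -⟩, hM_max⟩ :=
    zorn_le_nonempty₀ s chain_bound P ⟨hP, hP_ne_top, le_rfl⟩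
  exact ⟨M, ⟨hM, hM_ne_top, fun J hJ hMJ hJ_ne_top =>
    le_antisymm (hM_max ⟨hJ, hJ_ne_top, hPM.trans hMJ⟩ hMJ) hMJ⟩, hPM⟩

lemma IsGradedMaximal.isGradedPrime {M : Ideal R} (hM : IsGradedMaximal 𝒜 M) :
    IsGradedPrime 𝒜 M := by
  obtain ⟨hM_hom, hM_ne_top, hM_max⟩ := hM
  refine ⟨hM_hom, hM_ne_top, fun a b ha _ hab => or_iff_not_imp_left.2 fun haM => ?_⟩
  have h_span : (Ideal.span {a}).IsHomogeneous 𝒜 :=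
    Ideal.homogeneous_span 𝒜 {a} (by simpa using ha)
  have h_sup : M ⊔ Ideal.span {a} = ⊤ := by
    by_contra h_ne
    refine haM ?_
    rw [← hM_max _ (hM_hom.sup h_span) le_sup_left h_ne]
    exact Ideal.mem_sup_right (Ideal.mem_span_singleton_self a)
  obtain ⟨m, hm, z, hz, hmz⟩ := Submodule.mem_sup.1 (h_sup ▸ Submodule.mem_top : (1 : R) ∈ _)
  obtain ⟨r, rfl⟩ := Ideal.mem_span_singleton'.1 hz
  have hb : b = m * b + r * (a * b) := by linear_combination (-b) * hmz
  rw [hb]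
  exact M.add_mem (M.mul_mem_right b hm) (M.mul_mem_left r hab)

lemma IsPMPlusGraded.isGelfandGraded (hpm : IsPMPlusGraded 𝒜) : IsGelfandGraded 𝒜 := by
  intro P hP
  obtain ⟨M, hM, hPM⟩ := exists_isGradedMaximal_le hP.1 hP.2.1
  refine ⟨M, ⟨hM, hPM⟩, fun M' ⟨hM', hPM'⟩ => ?_⟩
  rcases hpm P M' M hP hM'.isGradedPrime hM.isGradedPrime hPM' hPM with h | h
  · exact (hM'.2.2 M hM.1 h hM.2.1).symm
  · exact hM.2.2 M' hM'.1 h hM'.2.1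

end GelfandGraded

section Transfer

variable {G : Type*} [AddGroup G] [DecidableEq G] {R R' : Type*} [CommRing R] [CommRing R']
variable {𝒜 : G → AddSubgroup R} [GradedRing 𝒜] {ℬ : G → AddSubgroup R'} [GradedRing ℬ]

lemma IsGradedPrime.comap (f : 𝒜 →+*ᵍ ℬ) {Q : Ideal R'} (hQ : IsGradedPrime ℬ Q) :
    IsGradedPrime 𝒜 (Q.comap f) := by
  obtain ⟨hQ_hom, hQ_ne_top, hQ_prime⟩ := hQ
  refine ⟨fun i r hr => ?_, fun h => hQ_ne_top ?_, fun a b ⟨i, ha⟩ ⟨j, hb⟩ hab => ?_⟩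
  · rw [Ideal.mem_comap, GradedRingHom.map_directSumDecompose]
    exact hQ_hom i hr
  · simpa using Ideal.comap_eq_top_iff.1 h
  · exact hQ_prime (f a) (f b) ⟨i, f.map_mem ha⟩ ⟨j, f.map_mem hb⟩ (by simpa using hab)

lemma IsPMPlusGraded.of_comap_reflects_le (f : 𝒜 →+*ᵍ ℬ)
    (hf : ∀ Q Q' : Ideal R', Q.comap f ≤ Q'.comap f → Q ≤ Q') (hpm : IsPMPlusGraded 𝒜) :
    IsPMPlusGraded ℬ := by
  intro P Q Q' hP hQ hQ' hPQ hPQ'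
  exact (hpm _ _ _ (hP.comap f) (hQ.comap f) (hQ'.comap f) (Ideal.comap_mono hPQ)
    (Ideal.comap_mono hPQ')).imp (hf Q Q') (hf Q' Q)

lemma IsPMPlusGraded.quotient (hpm : IsPMPlusGraded 𝒜) {I : Ideal R}
    {ℬ : G → AddSubgroup (R ⧸ I)} [GradedRing ℬ]
    (hℬ : ∀ g : G, ℬ g = (𝒜 g).map (Ideal.Quotient.mk I : R →+* R ⧸ I).toAddMonoidHom) :
    IsPMPlusGraded ℬ :=
  hpm.of_comap_reflects_le ⟨Ideal.Quotient.mk I, fun {g} x hx => hℬ g ▸ ⟨x, hx, rfl⟩⟩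
    fun Q Q' => (Ideal.comap_le_comap_iff_of_surjective _ Ideal.Quotient.mk_surjective Q Q').1

lemma IsPMPlusGraded.localization (hpm : IsPMPlusGraded 𝒜) {S : Submonoid R}
    {ℬ : G → AddSubgroup (Localization S)} [GradedRing ℬ]
    (hℬ : ∀ (g : G) (x : Localization S), x ∈ ℬ g ↔
      ∃ (r s : R) (h : G) (hs : s ∈ S), r ∈ 𝒜 (g + h) ∧ s ∈ 𝒜 h ∧
        x = Localization.mk r ⟨s, hs⟩) :
    IsPMPlusGraded ℬ := by
  let f : 𝒜 →+*ᵍ ℬ := ⟨algebraMap R (Localization S), fun {g} x hx => (hℬ g _).2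
    ⟨x, 1, 0, S.one_mem, by rwa [add_zero], SetLike.GradedOne.one_mem,
      (Localization.mk_one_eq_algebraMap x).symm⟩⟩
  exact hpm.of_comap_reflects_le f fun Q Q' => (IsLocalization.under_le_under_iff S _).1

end Transfer

section Statements

variable {G : Type*} [AddGroup G] [DecidableEq G] {R : Type*} [CommRing R]
variable (𝒜 : G → AddSubgroup R) [GradedRing 𝒜]

theorem stmt_14 (hpm : IsPMPlusGraded 𝒜) :
    IsGelfandGraded 𝒜 ∧
    (∀ I : Ideal R, I.IsHomogeneous 𝒜 →
      ∀ (ℬ : G → AddSubgroup (R ⧸ I)) [GradedRing ℬ],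
        (∀ g : G, ℬ g = (𝒜 g).map (Ideal.Quotient.mk I : R →+* R ⧸ I).toAddMonoidHom) →
        IsPMPlusGraded ℬ) ∧
    (∀ (S : Submonoid R), (∀ s ∈ S, SetLike.IsHomogeneousElem 𝒜 s) →
      ∀ (ℬ : G → AddSubgroup (Localization S)) [GradedRing ℬ],
        (∀ (g : G) (x : Localization S), x ∈ ℬ g ↔
          ∃ (r s : R) (h : G) (hs : s ∈ S), r ∈ 𝒜 (g + h) ∧ s ∈ 𝒜 h ∧
            x = Localization.mk r ⟨s, hs⟩) →
        IsPMPlusGraded ℬ) := by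
  exact ⟨hpm.isGelfandGraded, fun _ _ _ _ hℬ => hpm.quotient hℬ,
    fun _ _ _ _ hℬ => hpm.localization hℬ⟩
end Statements
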